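/- Let S be a set containing a distinguished element O, let Ω ⊆ S_nc respect direct sums of matrices with supp Ω nonempty, and suppose Ω_n is a complete metric space with respect to a metric ρ_n for every n ∈ supp Ω. Let Ω^j = ∐_{n ∈ supp Ω} Ω^j_n ⊆ Ω, j = 1, 2, …, be a sequence of sets such that: (i) each Ω^j respects direct sums of matrices; (ii) each Ω^j_n is a nonempty closed subset of Ω_n for every n ∈ supp Ω; (iii) Ω^1 ⊇ Ω^2 ⊇ ⋯; (iv) diam Ω^j_n := sup{ρ_n(X,Y) : X, Y ∈ Ω^j_n} → 0 as j → ∞, for every n ∈ supp Ω. Let d = gcd{n : n ∈ supp Ω}. Then there exists a unique X_* ∈ S^{d×d} such that ∩_{j=1}^∞ Ω^j = { ⊕_{α=1}^{n/d} X_* : n ∈ supp Ω }. -/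

import Mathlib

namespace NCPaper

variable {S : Type*}

/-- Direct sum of two square matrices over `S`, with off-diagonal entries `O`. -/
def dSum (O : S) {n m : ℕ} (X : Matrix (Fin n) (Fin n) S) (Y : Matrix (Fin m) (Fin m) S) :
    Matrix (Fin (n + m)) (Fin (n + m)) S := fun i j =>
  if hi : (i : ℕ) < n then
    if hj : (j : ℕ) < n then X ⟨i, hi⟩ ⟨j, hj⟩ else O
  else if hj : (j : ℕ) < n then O
  else Y ⟨(i : ℕ) - n, by have := i.isLt; omega⟩ ⟨(j : ℕ) - n, by have := j.isLt; omega⟩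

/-- Direct sum of `k` copies of a `d × d` matrix, as a `(k*d) × (k*d)` matrix. -/
def repSum (O : S) {d : ℕ} (k : ℕ) (X : Matrix (Fin d) (Fin d) S) :
    Matrix (Fin (k * d)) (Fin (k * d)) S := fun i j =>
  if (i : ℕ) / d = (j : ℕ) / d then
    X ⟨(i : ℕ) % d, Nat.mod_lt _ (Nat.pos_of_ne_zero fun h => absurd i.isLt (by simp [h]))⟩
      ⟨(j : ℕ) % d, Nat.mod_lt _ (Nat.pos_of_ne_zero fun h => absurd j.isLt (by simp [h]))⟩
  else O

/-- Cast a square matrix along an equality of sizes. -/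
def castMat {n m : ℕ} (h : n = m) (X : Matrix (Fin n) (Fin n) S) :
    Matrix (Fin m) (Fin m) S := fun i j => X (Fin.cast h.symm i) (Fin.cast h.symm j)

/-- The support of a subset of the nc space: sizes where it is nonempty. -/
def supp (Ω : ∀ n : ℕ, Set (Matrix (Fin n) (Fin n) S)) : Set ℕ :=
  {n | 0 < n ∧ (Ω n).Nonempty}

/-- A subset of the nc space respects direct sums of matrices. -/
def RespectsDSums (O : S) (Ω : ∀ n : ℕ, Set (Matrix (Fin n) (Fin n) S)) : Prop :=
  ∀ ⦃n m : ℕ⦄ (X : Matrix (Fin n) (Fin n) S) (Y : Matrix (Fin m) (Fin m) S),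
    X ∈ Ω n → Y ∈ Ω m → dSum O X Y ∈ Ω (n + m)

/-- `ρ` is a metric on the subset `s`. -/
def IsMetricOn {A : Type*} (ρ : A → A → ℝ) (s : Set A) : Prop :=
  (∀ x ∈ s, ∀ y ∈ s, (ρ x y = 0 ↔ x = y)) ∧
  (∀ x ∈ s, ∀ y ∈ s, ρ x y = ρ y x) ∧
  (∀ x ∈ s, ∀ y ∈ s, ∀ z ∈ s, ρ x z ≤ ρ x y + ρ y z)

/-- The subset `s` is complete with respect to `ρ`: every Cauchy sequence in `s`
converges to a point of `s`. -/
def IsCompleteOn {A : Type*} (ρ : A → A → ℝ) (s : Set A) : Prop :=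
  ∀ u : ℕ → A, (∀ j, u j ∈ s) →
    (∀ ε > (0 : ℝ), ∃ N : ℕ, ∀ j ≥ N, ∀ k ≥ N, ρ (u j) (u k) < ε) →
    ∃ L ∈ s, ∀ ε > (0 : ℝ), ∃ N : ℕ, ∀ j ≥ N, ρ (u j) L < ε

/-- The subset `s` is closed in the ambient set `t` with respect to `ρ`: any point of `t` that
is a `ρ`-limit of a sequence from `s` belongs to `s`. -/
def IsClosedIn {A : Type*} (ρ : A → A → ℝ) (s t : Set A) : Prop :=
  ∀ u : ℕ → A, (∀ j, u j ∈ s) → ∀ L ∈ t,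
    (∀ ε > (0 : ℝ), ∃ N : ℕ, ∀ j ≥ N, ρ (u j) L < ε) → L ∈ s

/-!
By Cantor's intersection theorem every level `n ∈ supp Ω` of `⋂ j, Ωʲ` is a single matrix `Lₙ`,
and as the intersection respects direct sums, `L (n + m) = Lₙ ⊕ Lₘ = Lₘ ⊕ Lₙ`. Hence all `Lₙ`
are truncations of one infinite matrix `F`, which is invariant under diagonal shifts by members of
`supp Ω` and vanishes across the corresponding block boundaries. Being an additive semigroup with
gcd `d`, `supp Ω` contains all large multiples of `d`, in particular two members differing by `d`;
so `F` is `d`-periodic along the diagonal and block diagonal with `d × d` blocks, i.e. every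
`Lₙ` is a direct sum of copies of one `d × d` matrix.
-/

theorem dSum_castAdd_castAdd (O : S) {n m : ℕ} (X : Matrix (Fin n) (Fin n) S)
    (Y : Matrix (Fin m) (Fin m) S) (i j : Fin n) :
    dSum O X Y (Fin.castAdd m i) (Fin.castAdd m j) = X i j := by
  simp [dSum]

theorem dSum_natAdd_natAdd (O : S) {n m : ℕ} (X : Matrix (Fin n) (Fin n) S)
    (Y : Matrix (Fin m) (Fin m) S) (i j : Fin m) :
    dSum O X Y (Fin.natAdd n i) (Fin.natAdd n j) = Y i j := by
  simp [dSum]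

theorem dSum_castAdd_natAdd (O : S) {n m : ℕ} (X : Matrix (Fin n) (Fin n) S)
    (Y : Matrix (Fin m) (Fin m) S) (i : Fin n) (j : Fin m) :
    dSum O X Y (Fin.castAdd m i) (Fin.natAdd n j) = O := by
  simp [dSum]

theorem dSum_natAdd_castAdd (O : S) {n m : ℕ} (X : Matrix (Fin n) (Fin n) S)
    (Y : Matrix (Fin m) (Fin m) S) (i : Fin m) (j : Fin n) :
    dSum O X Y (Fin.natAdd n i) (Fin.castAdd m j) = O := by
  simp [dSum]

theorem castMat_injective {n m : ℕ} (h : n = m) : Function.Injective (castMat (S := S) h) := by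
  subst h
  exact fun _ _ hXY => hXY

theorem repSum_injective (O : S) {d k : ℕ} (hk : 0 < k) :
    Function.Injective (repSum O (d := d) k) := by
  intro X Y hXY
  ext p q
  have hd : d ≤ k * d := Nat.le_mul_of_pos_left d hk
  simpa [repSum, Nat.div_eq_of_lt, Nat.mod_eq_of_lt] using
    congr_fun₂ hXY ⟨p, by omega⟩ ⟨q, by omega⟩

theorem apply_mk_congr (L : ∀ n : ℕ, Matrix (Fin n) (Fin n) S) {a b : ℕ} (h : a = b) {i j : ℕ}
    (hia : i < a) (hja : j < a) (hib : i < b) (hjb : j < b) :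
    L a ⟨i, hia⟩ ⟨j, hja⟩ = L b ⟨i, hib⟩ ⟨j, hjb⟩ := by
  subst h
  rfl

section Metric

variable {A : Type*} {ρ : A → A → ℝ} {s : Set A}

theorem IsMetricOn.nonneg (hρ : IsMetricOn ρ s) {x y : A} (hx : x ∈ s) (hy : y ∈ s) :
    0 ≤ ρ x y := by
  obtain ⟨hzero, hsymm, htri⟩ := hρ
  have := htri x hx y hy x hx
  rw [(hzero x hx x hx).2 rfl, hsymm y hy x hx] at this
  linarith

theorem subsingleton_iInter_of_diam_le (hρ : IsMetricOn ρ s) {t : ℕ → Set A}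
    (hts : ∀ j, t j ⊆ s)
    (hdiam : ∀ ε > (0 : ℝ), ∃ J, ∀ x ∈ t J, ∀ y ∈ t J, ρ x y ≤ ε) :
    (⋂ j, t j).Subsingleton := by
  intro x hx y hy
  rw [Set.mem_iInter] at hx hy
  have hxs := hts 0 (hx 0)
  have hys := hts 0 (hy 0)
  refine (hρ.1 x hxs y hys).1 (le_antisymm (le_of_forall_pos_le_add fun ε hε => ?_)
    (hρ.nonneg hxs hys))
  obtain ⟨J, hJ⟩ := hdiam ε hε
  simpa using hJ x (hx J) y (hy J)

theorem nonempty_iInter_of_isCompleteOn (hc : IsCompleteOn ρ s) {t : ℕ → Set A}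
    (hts : ∀ j, t j ⊆ s) (hanti : Antitone t) (hne : ∀ j, (t j).Nonempty)
    (hcl : ∀ j, IsClosedIn ρ (t j) s)
    (hdiam : ∀ ε > (0 : ℝ), ∃ J, ∀ x ∈ t J, ∀ y ∈ t J, ρ x y ≤ ε) :
    (⋂ j, t j).Nonempty := by
  choose u hu using hne
  have hcauchy : ∀ ε > (0 : ℝ), ∃ N, ∀ j ≥ N, ∀ k ≥ N, ρ (u j) (u k) < ε := by
    intro ε hε
    obtain ⟨J, hJ⟩ := hdiam (ε / 2) (half_pos hε)
    exact ⟨J, fun j hj k hk =>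
      (hJ _ (hanti hj (hu j)) _ (hanti hk (hu k))).trans_lt (half_lt_self hε)⟩
  obtain ⟨x, hxs, hlim⟩ := hc u (fun j => hts j (hu j)) hcauchy
  refine ⟨x, Set.mem_iInter.2 fun j => hcl j (fun k => u (k + j))
    (fun k => hanti (Nat.le_add_left j k) (hu _)) x hxs fun ε hε => ?_⟩
  obtain ⟨N, hN⟩ := hlim ε hε
  exact ⟨N, fun k hk => hN (k + j) (by omega)⟩

end Metric

theorem AddSubmonoid.eq_zero_or_mem_of_mem_closure {M : Type*} [AddMonoid M] {G : Set M}
    (hG : ∀ a ∈ G, ∀ b ∈ G, a + b ∈ G) {x : M} (hx : x ∈ AddSubmonoid.closure G) :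
    x = 0 ∨ x ∈ G := by
  induction hx using AddSubmonoid.closure_induction with
  | mem x hx => exact Or.inr hx
  | zero => exact Or.inl rfl
  | add x y _ _ hx hy =>
    rcases hx with rfl | hx
    · simpa using hy
    rcases hy with rfl | hy
    · simpa using Or.inr hx
    exact Or.inr (hG x hx y hy)

theorem eventually_mul_mem_of_gcd {G : Set ℕ} {d : ℕ} (hG : ∀ a ∈ G, ∀ b ∈ G, a + b ∈ G)
    (hdvd : ∀ n ∈ G, d ∣ n) (hgcd : ∀ e : ℕ, (∀ n ∈ G, e ∣ n) → e ∣ d) (hd : d ≠ 0) :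
    ∀ᶠ k in Filter.atTop, k * d ∈ G := by
  have hsetGcd : Nat.setGcd G = d :=
    Nat.dvd_antisymm (hgcd _ fun _ => Nat.setGcd_dvd_of_mem) (Nat.dvd_setGcd_iff.2 hdvd)
  obtain ⟨N, hN⟩ := Nat.exists_mem_closure_of_ge (s := G)
  filter_upwards [Filter.eventually_ge_atTop (N + 1)] with k hk
  have hkd : k ≤ k * d := Nat.le_mul_of_pos_right k (Nat.pos_of_ne_zero hd)
  refine (AddSubmonoid.eq_zero_or_mem_of_mem_closure hG
    (hN (k * d) (by omega) (hsetGcd ▸ dvd_mul_left d k))).resolve_left ?_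
  omega

theorem eq_ite_div_of_add_add {F : ℕ → ℕ → S} {O : S} {d : ℕ} (hd : 0 < d)
    (hshift : ∀ i j, F (d + i) (d + j) = F i j)
    (hzero : ∀ i j, i < d → F i (d + j) = O ∧ F (d + j) i = O) (i j : ℕ) :
    F i j = if i / d = j / d then F (i % d) (j % d) else O := by
  induction i using Nat.strong_induction_on generalizing j with
  | _ i ih =>
  rcases lt_or_ge i d with hi | hi <;> rcases lt_or_ge j d with hj | hj
  · simp [Nat.div_eq_of_lt, Nat.mod_eq_of_lt, hi, hj]
  · obtain ⟨j, rfl⟩ := Nat.exists_eq_add_of_le hj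
    rw [Nat.div_eq_of_lt hi, Nat.add_div_left _ hd, if_neg (Nat.succ_ne_zero _).symm]
    exact (hzero i j hi).1
  · obtain ⟨i, rfl⟩ := Nat.exists_eq_add_of_le hi
    rw [Nat.div_eq_of_lt hj, Nat.add_div_left _ hd, if_neg (Nat.succ_ne_zero _)]
    exact (hzero j i hj).2
  · obtain ⟨i, rfl⟩ := Nat.exists_eq_add_of_le hi
    obtain ⟨j, rfl⟩ := Nat.exists_eq_add_of_le hj
    rw [hshift, ih i (by omega), Nat.add_div_left _ hd, Nat.add_div_left _ hd,
      Nat.add_mod_left, Nat.add_mod_left]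
    simp only [Nat.add_right_cancel_iff]

section DirectSumFamily

variable {O : S} {G : Set ℕ} {L : ∀ n : ℕ, Matrix (Fin n) (Fin n) S}

theorem apply_eq_apply_of_dSum (hL : ∀ n ∈ G, ∀ m ∈ G, L (n + m) = dSum O (L n) (L m))
    {N M : ℕ} (hN : N ∈ G) (hM : M ∈ G) {i j : ℕ} (hiN : i < N) (hjN : j < N) (hiM : i < M)
    (hjM : j < M) : L N ⟨i, hiN⟩ ⟨j, hjN⟩ = L M ⟨i, hiM⟩ ⟨j, hjM⟩ :=
  calc L N ⟨i, hiN⟩ ⟨j, hjN⟩ = L (N + M) ⟨i, by omega⟩ ⟨j, by omega⟩ := by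
        rw [hL N hN M hM]; exact (dSum_castAdd_castAdd O _ _ ⟨i, hiN⟩ ⟨j, hjN⟩).symm
    _ = L (M + N) ⟨i, by omega⟩ ⟨j, by omega⟩ := apply_mk_congr L (add_comm N M) _ _ _ _
    _ = L M ⟨i, hiM⟩ ⟨j, hjM⟩ := by
        rw [hL M hM N hN]; exact dSum_castAdd_castAdd O _ _ ⟨i, hiM⟩ ⟨j, hjM⟩

theorem exists_entries_of_dSum (hL : ∀ n ∈ G, ∀ m ∈ G, L (n + m) = dSum O (L n) (L m))
    (hunb : ∀ k, ∃ N ∈ G, k < N) :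
    ∃ F : ℕ → ℕ → S, ∀ N ∈ G, ∀ i j : Fin N, L N i j = F i j := by
  choose K hKG hK using hunb
  refine ⟨fun i j => L (K (i + j)) ⟨i, by have := hK (i + j); omega⟩
    ⟨j, by have := hK (i + j); omega⟩, fun N hN i j => ?_⟩
  exact apply_eq_apply_of_dSum hL hN (hKG _) i.2 j.2 _ _

variable {F : ℕ → ℕ → S}

theorem entries_add_add (hG : ∀ a ∈ G, ∀ b ∈ G, a + b ∈ G)
    (hL : ∀ n ∈ G, ∀ m ∈ G, L (n + m) = dSum O (L n) (L m)) (hunb : ∀ k, ∃ N ∈ G, k < N)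
    (hF : ∀ N ∈ G, ∀ i j : Fin N, L N i j = F i j) {n : ℕ} (hn : n ∈ G) (i j : ℕ) :
    F (n + i) (n + j) = F i j := by
  obtain ⟨N, hN, hijN⟩ := hunb (i + j)
  have hi : i < N := by omega
  have hj : j < N := by omega
  have := hF (n + N) (hG n hn N hN) (Fin.natAdd n ⟨i, hi⟩) (Fin.natAdd n ⟨j, hj⟩)
  rw [hL n hn N hN, dSum_natAdd_natAdd, hF N hN] at this
  simpa using this.symm

theorem entries_eq_zero_of_lt (hG : ∀ a ∈ G, ∀ b ∈ G, a + b ∈ G)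
    (hL : ∀ n ∈ G, ∀ m ∈ G, L (n + m) = dSum O (L n) (L m)) (hunb : ∀ k, ∃ N ∈ G, k < N)
    (hF : ∀ N ∈ G, ∀ i j : Fin N, L N i j = F i j) {n : ℕ} (hn : n ∈ G) {i : ℕ} (hi : i < n)
    (j : ℕ) : F i (n + j) = O ∧ F (n + j) i = O := by
  obtain ⟨N, hN, hjN⟩ := hunb j
  have h₁ := hF (n + N) (hG n hn N hN) (Fin.castAdd N ⟨i, hi⟩) (Fin.natAdd n ⟨j, hjN⟩)
  have h₂ := hF (n + N) (hG n hn N hN) (Fin.natAdd n ⟨j, hjN⟩) (Fin.castAdd N ⟨i, hi⟩)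
  rw [hL n hn N hN, dSum_castAdd_natAdd] at h₁
  rw [hL n hn N hN, dSum_natAdd_castAdd] at h₂
  exact ⟨by simpa using h₁.symm, by simpa using h₂.symm⟩

theorem exists_eq_castMat_repSum (hG : ∀ a ∈ G, ∀ b ∈ G, a + b ∈ G)
    (hL : ∀ n ∈ G, ∀ m ∈ G, L (n + m) = dSum O (L n) (L m)) {d : ℕ} (hdvd : ∀ n ∈ G, d ∣ n)
    (hgcd : ∀ e : ℕ, (∀ n ∈ G, e ∣ n) → e ∣ d) (hd : d ≠ 0) :
    ∃ Xs : Matrix (Fin d) (Fin d) S, ∀ n (hn : n ∈ G),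
      L n = castMat (Nat.div_mul_cancel (hdvd n hn)) (repSum O (n / d) Xs) := by
  have hmul := eventually_mul_mem_of_gcd hG hdvd hgcd hd
  have hunb : ∀ k, ∃ N ∈ G, k < N := fun k => by
    obtain ⟨m, hm, hkm⟩ := (hmul.and (Filter.eventually_gt_atTop k)).exists
    exact ⟨m * d, hm, hkm.trans_le (Nat.le_mul_of_pos_right m (Nat.pos_of_ne_zero hd))⟩
  -- Two members `a`, `a + d` of `G` turn shifts by, and blocks of size, `a` and `a + d` into
  -- shifts by, and blocks of size, `d`.
  obtain ⟨a, ha, had⟩ := (hmul.and ((Filter.tendsto_add_atTop_nat 1).eventually hmul)).exists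
  rw [add_one_mul] at had
  obtain ⟨F, hF⟩ := exists_entries_of_dSum hL hunb
  have hshift : ∀ n ∈ G, ∀ i j, F (n + i) (n + j) = F i j := fun n hn =>
    entries_add_add hG hL hunb hF hn
  have hblock := eq_ite_div_of_add_add (F := F) (O := O) (Nat.pos_of_ne_zero hd)
    (fun i j => by rw [← hshift _ ha, ← add_assoc, ← add_assoc, hshift _ had])
    (fun i j hi => by
      rw [← hshift _ ha i, ← hshift _ ha (d + j), ← add_assoc]
      exact entries_eq_zero_of_lt hG hL hunb hF had (Nat.add_lt_add_left hi _) j)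
  refine ⟨fun p q => F p q, fun n hn => ?_⟩
  ext i j
  simp [hF n hn, hblock i, castMat, repSum]

end DirectSumFamily

theorem existsUnique_eq_castMat_repSum {O : S} {I : ∀ n : ℕ, Set (Matrix (Fin n) (Fin n) S)}
    {G : Set ℕ} {d : ℕ} (hI : RespectsDSums O I) (hG : ∀ n, (I n).Nonempty ↔ n ∈ G)
    (hsing : ∀ n ∈ G, (I n).Subsingleton) (hdvd : ∀ n ∈ G, d ∣ n)
    (hgcd : ∀ e : ℕ, (∀ n ∈ G, e ∣ n) → e ∣ d) (hd : d ≠ 0) :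
    ∃! Xs : Matrix (Fin d) (Fin d) S, ∀ (n : ℕ) (X : Matrix (Fin n) (Fin n) S),
      X ∈ I n ↔ ∃ hn : n ∈ G,
        X = castMat (Nat.div_mul_cancel (hdvd n hn)) (repSum O (n / d) Xs) := by
  have hGadd : ∀ a ∈ G, ∀ b ∈ G, a + b ∈ G := fun a ha b hb => by
    obtain ⟨X, hX⟩ := (hG a).2 ha
    obtain ⟨Y, hY⟩ := (hG b).2 hb
    exact (hG _).1 ⟨_, hI X Y hX hY⟩
  have : Inhabited S := ⟨O⟩
  choose! L hL using fun n (hn : n ∈ G) => (hG n).2 hn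
  have hmem : ∀ n ∈ G, ∀ X ∈ I n, X = L n := fun n hn X hX => hsing n hn hX (hL n hn)
  have hLadd : ∀ n ∈ G, ∀ m ∈ G, L (n + m) = dSum O (L n) (L m) := fun n hn m hm =>
    (hmem _ (hGadd n hn m hm) _ (hI _ _ (hL n hn) (hL m hm))).symm
  obtain ⟨Xs, hXs⟩ := exists_eq_castMat_repSum hGadd hLadd hdvd hgcd hd
  refine ⟨Xs, fun n X => ⟨fun hX => ?_, ?_⟩, fun Ys hYs => ?_⟩
  · have hn := (hG n).1 ⟨X, hX⟩
    exact ⟨hn, (hmem n hn X hX).trans (hXs n hn)⟩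
  · rintro ⟨hn, rfl⟩
    rw [← hXs n hn]
    exact hL n hn
  · obtain ⟨n, hn, hn0⟩ : ∃ n ∈ G, n ≠ 0 := by
      by_contra! h
      exact hd (zero_dvd_iff.1 (hgcd 0 fun n hn => by rw [h n hn]))
    obtain ⟨_, hLn⟩ := (hYs n (L n)).1 (hL n hn)
    rw [hXs n hn] at hLn
    have hk : 0 < n / d := Nat.div_pos (Nat.le_of_dvd (Nat.pos_of_ne_zero hn0) (hdvd n hn))
      (Nat.pos_of_ne_zero hd)
    exact (repSum_injective O hk (castMat_injective _ hLn)).symm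

theorem nested_nc_sets_general {S : Type*} (O : S)
    (Ω : ∀ n : ℕ, Set (Matrix (Fin n) (Fin n) S)) (hΩ0 : Ω 0 = ∅)
    (hne : (supp Ω).Nonempty)
    (ρ : ∀ n : ℕ, Matrix (Fin n) (Fin n) S → Matrix (Fin n) (Fin n) S → ℝ)
    (hmetric : ∀ n ∈ supp Ω, IsMetricOn (ρ n) (Ω n))
    (hcomplete : ∀ n ∈ supp Ω, IsCompleteOn (ρ n) (Ω n))
    (Ωj : ℕ → ∀ n : ℕ, Set (Matrix (Fin n) (Fin n) S))
    (hsub : ∀ j n, Ωj j n ⊆ Ω n)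
    (hdirj : ∀ j, RespectsDSums O (Ωj j))
    (hnonempty : ∀ j, ∀ n ∈ supp Ω, (Ωj j n).Nonempty)
    (hclosed : ∀ j, ∀ n ∈ supp Ω, IsClosedIn (ρ n) (Ωj j n) (Ω n))
    (hnested : ∀ j n, Ωj (j + 1) n ⊆ Ωj j n)
    (hdiam : ∀ n ∈ supp Ω, ∀ ε > (0 : ℝ), ∃ J : ℕ, ∀ j ≥ J,
      ∀ X ∈ Ωj j n, ∀ Y ∈ Ωj j n, ρ n X Y ≤ ε)
    (d : ℕ) (hdvd : ∀ n ∈ supp Ω, d ∣ n)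
    (hgcd : ∀ e : ℕ, (∀ n ∈ supp Ω, e ∣ n) → e ∣ d) :
    ∃! Xs : Matrix (Fin d) (Fin d) S, ∀ (n : ℕ) (X : Matrix (Fin n) (Fin n) S),
      (∀ j, X ∈ Ωj j n) ↔ ∃ hn : n ∈ supp Ω,
        X = castMat (Nat.div_mul_cancel (hdvd n hn)) (repSum O (n / d) Xs) := by
  let I : ∀ n : ℕ, Set (Matrix (Fin n) (Fin n) S) := fun n => ⋂ j, Ωj j n
  have hdiam' : ∀ n ∈ supp Ω, ∀ ε > (0 : ℝ), ∃ J, ∀ X ∈ Ωj J n, ∀ Y ∈ Ωj J n, ρ n X Y ≤ ε :=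
    fun n hn ε hε => (hdiam n hn ε hε).imp fun J hJ => hJ J le_rfl
  have hI : RespectsDSums O I := fun _ _ X Y hX hY => Set.mem_iInter.2 fun j =>
    hdirj j X Y (Set.mem_iInter.1 hX j) (Set.mem_iInter.1 hY j)
  have hsupp : ∀ n, (I n).Nonempty ↔ n ∈ supp Ω := fun n => by
    refine ⟨fun ⟨X, hX⟩ => ⟨Nat.pos_of_ne_zero ?_, X, hsub 0 n (Set.mem_iInter.1 hX 0)⟩,
      fun hn => nonempty_iInter_of_isCompleteOn (hcomplete n hn) (hsub · n)
        (antitone_nat_of_succ_le fun j => hnested j n) (hnonempty · n hn) (hclosed · n hn)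
        (hdiam' n hn)⟩
    rintro rfl
    simpa [hΩ0] using hsub 0 0 (Set.mem_iInter.1 hX 0)
  have hsing : ∀ n ∈ supp Ω, (I n).Subsingleton := fun n hn =>
    subsingleton_iInter_of_diam_le (hmetric n hn) (hsub · n) (hdiam' n hn)
  have hd : d ≠ 0 := by
    obtain ⟨n, hn⟩ := hne
    rintro rfl
    exact hn.1.ne' (zero_dvd_iff.1 (hdvd n hn))
  simpa only [I, Set.mem_iInter] using existsUnique_eq_castMat_repSum hI hsupp hsing hdvd hgcd hd

/-- **The principle of nested nc sets.** Given a nested sequence `Ωj` of direct-sum-closed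
subsets of a direct-sum-closed `Ω` (whose levels are complete metric spaces), with nonempty
closed levels and levelwise diameters tending to `0`, the intersection of the `Ωj` consists
exactly of the matrices `⊕_{α=1}^{n/d} Xs`, `n ∈ supp Ω`, for a unique `d × d` matrix
`Xs` (`d = gcd (supp Ω)`). -/
theorem nested_nc_sets {S : Type*} (O : S)
    (Ω : ∀ n : ℕ, Set (Matrix (Fin n) (Fin n) S)) (hΩ0 : Ω 0 = ∅)
    (hdir : RespectsDSums O Ω) (hne : (supp Ω).Nonempty)
    (ρ : ∀ n : ℕ, Matrix (Fin n) (Fin n) S → Matrix (Fin n) (Fin n) S → ℝ)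
    (hmetric : ∀ n ∈ supp Ω, IsMetricOn (ρ n) (Ω n))
    (hcomplete : ∀ n ∈ supp Ω, IsCompleteOn (ρ n) (Ω n))
    (Ωj : ℕ → ∀ n : ℕ, Set (Matrix (Fin n) (Fin n) S))
    (hsub : ∀ j n, Ωj j n ⊆ Ω n)
    (hdirj : ∀ j, RespectsDSums O (Ωj j))
    (hnonempty : ∀ j, ∀ n ∈ supp Ω, (Ωj j n).Nonempty)
    (hclosed : ∀ j, ∀ n ∈ supp Ω, IsClosedIn (ρ n) (Ωj j n) (Ω n))
    (hnested : ∀ j n, Ωj (j + 1) n ⊆ Ωj j n)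
    (hdiam : ∀ n ∈ supp Ω, ∀ ε > (0 : ℝ), ∃ J : ℕ, ∀ j ≥ J,
      ∀ X ∈ Ωj j n, ∀ Y ∈ Ωj j n, ρ n X Y ≤ ε)
    (d : ℕ) (hdvd : ∀ n ∈ supp Ω, d ∣ n)
    (hgcd : ∀ e : ℕ, (∀ n ∈ supp Ω, e ∣ n) → e ∣ d) :
    ∃! Xs : Matrix (Fin d) (Fin d) S, ∀ (n : ℕ) (X : Matrix (Fin n) (Fin n) S),
      (∀ j, X ∈ Ωj j n) ↔ ∃ hn : n ∈ supp Ω,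
        X = castMat (Nat.div_mul_cancel (hdvd n hn)) (repSum O (n / d) Xs) :=
  nested_nc_sets_general O Ω hΩ0 hne ρ hmetric hcomplete Ωj hsub hdirj hnonempty hclosed hnested
    hdiam d hdvd hgcd

end NCPaper
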